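/- The set of zeros of the Choi–Lam quartic Q(x,y,z,w) = x²y² + y²z² + z²x² + w⁴ − 4xyzw on the unit sphere S³ ⊂ ℝ⁴ consists exactly of the 14 points ±(1,0,0,0), ±(0,1,0,0), ±(0,0,1,0), ±(1,−1,−1,1)/2, ±(−1,1,−1,1)/2, ±(−1,−1,1,1)/2, ±(1,1,1,1)/2; moreover any quadratic form P on ℝ⁴ vanishing at all these points is of the form a₁(xy−zw) + a₂(yz−xw) + a₃(zx−yw) and hence also vanishes at (0,0,0,1), which is not a zero of Q. In particular the zero set of Q is not cut out by quadratic forms. -/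

import Mathlib

/-!
On the sphere, `Q = 0` is the equality case of AM-GM for the four squares
`(xy)², (yz)², (zx)², (w²)²`, which must therefore be equal, with `xyzw ≥ 0`: either `w = 0` and
`v` is a coordinate vector, or `x² = y² = z² = w² = 1/4` and `xyzw > 0`, which leaves eight sign
patterns. A quadratic form is a combination `∑ cᵢⱼ XᵢXⱼ`; vanishing at `e₁, e₂, e₃` kills the
coefficients of `x², y², z²`, and vanishing at the four zeros `(±1, ±1, ±1, 1)/2` kills that of `w²`
and makes the coefficients of `xw, yw, zw` the negatives of those of `yz, zx, xy`. Such a form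
vanishes at `e₄`, where `Q` does not.
-/

open MvPolynomial

/-- The Choi–Lam quartic `Q(x,y,z,w) = x²y² + y²z² + z²x² + w⁴ − 4xyzw`. -/
noncomputable def QCL : MvPolynomial (Fin 4) ℝ :=
  X 0 ^ 2 * X 1 ^ 2 + X 1 ^ 2 * X 2 ^ 2 + X 2 ^ 2 * X 0 ^ 2 + X 3 ^ 4
    - 4 * X 0 * X 1 * X 2 * X 3

/-- The 14 spherical zeros of the Choi–Lam quartic. -/
def CLzeros : Set (Fin 4 → ℝ) :=
  {![1, 0, 0, 0], -![1, 0, 0, 0], ![0, 1, 0, 0], -![0, 1, 0, 0],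
    ![0, 0, 1, 0], -![0, 0, 1, 0],
    ![1/2, -1/2, -1/2, 1/2], -![1/2, -1/2, -1/2, 1/2],
    ![-1/2, 1/2, -1/2, 1/2], -![-1/2, 1/2, -1/2, 1/2],
    ![-1/2, -1/2, 1/2, 1/2], -![-1/2, -1/2, 1/2, 1/2],
    ![1/2, 1/2, 1/2, 1/2], -![1/2, 1/2, 1/2, 1/2]}

open Pointwise

theorem sq_eq_sq_of_sum_sq_sq_eq_sixteen_mul {p q r s : ℝ}
    (h : (p^2 + q^2 + r^2 + s^2)^2 = 16 * (p*q*r*s)) :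
    p^2 = q^2 ∧ r^2 = s^2 ∧ p^2 = r^2 := by
  have hsos : (p^2 + q^2 - r^2 - s^2)^2 + 4 * (p*r - q*s)^2 + 4 * (p*s - q*r)^2 = 0 := by
    linear_combination h
  have hsum : p^2 + q^2 = r^2 + s^2 := by nlinarith [sq_nonneg (p*r - q*s), sq_nonneg (p*s - q*r)]
  have hpr : p*r = q*s := by nlinarith [sq_nonneg (p^2 + q^2 - r^2 - s^2), sq_nonneg (p*s - q*r)]
  have hps : p*s = q*r := by nlinarith [sq_nonneg (p^2 + q^2 - r^2 - s^2), sq_nonneg (p*r - q*s)]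
  have hpq : (p^2 - q^2) * (r^2 + s^2) = 0 := by
    linear_combination (p*r + q*s) * hpr + (p*s + q*r) * hps
  have hrs : (r^2 - s^2) * (p^2 + q^2) = 0 := by
    linear_combination (p*r + q*s) * hpr - (p*s + q*r) * hps
  have hrs' : (r^2 - s^2) * (r^2 + s^2) = 0 := by linear_combination hrs - (r^2 - s^2) * hsum
  rcases eq_or_ne (r^2 + s^2) 0 with h0 | h0
  · refine ⟨?_, ?_, ?_⟩ <;> nlinarith [sq_nonneg p, sq_nonneg q, sq_nonneg r, sq_nonneg s]
  · have := (mul_eq_zero.1 hpq).resolve_right h0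
    have := (mul_eq_zero.1 hrs').resolve_right h0
    refine ⟨?_, ?_, ?_⟩ <;> linarith

theorem MvPolynomial.IsHomogeneous.exists_eq_sum_C_mul_X_mul_X {σ R : Type*} [CommSemiring R]
    [Fintype σ] {P : MvPolynomial σ R} (hP : P.IsHomogeneous 2) :
    ∃ c : σ → σ → R, P = ∑ i, ∑ j, C (c i j) * (X i * X j) := by
  have hrange : Set.range X * Set.range X =
      Set.range fun ij : σ × σ => (X ij.1 * X ij.2 : MvPolynomial σ R) := by
    ext; simp [Set.mem_mul, eq_comm]
  rw [← mem_homogeneousSubmodule, ← homogeneousSubmodule_one_pow,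
    homogeneousSubmodule_one_eq_span_X, sq, Submodule.span_mul_span, hrange,
    Submodule.mem_span_range_iff_exists_fun] at hP
  obtain ⟨c, rfl⟩ := hP
  exact ⟨fun i j => c (i, j), by simp only [Fintype.sum_prod_type, smul_eq_C_mul]⟩

lemma eval_QCL (x y z w : ℝ) :
    eval ![x, y, z, w] QCL = x^2*y^2 + y^2*z^2 + z^2*x^2 + w^4 - 4*x*y*z*w := by
  simp [QCL]

lemma eval_QCL_eq_zero_and_sum_sq_eq_one_of_mem_CLzeros {v : Fin 4 → ℝ} (hv : v ∈ CLzeros) :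
    eval v QCL = 0 ∧ ∑ i, v i ^ 2 = 1 := by
  simp only [CLzeros, Set.mem_insert_iff, Set.mem_singleton_iff] at hv
  rcases hv with rfl|rfl|rfl|rfl|rfl|rfl|rfl|rfl|rfl|rfl|rfl|rfl|rfl|rfl <;>
    norm_num [QCL, Fin.sum_univ_four, Matrix.cons_val_two, Matrix.cons_val_three, Matrix.tail_cons,
      Matrix.head_cons]

lemma mem_CLzeros_of_axis {x y z : ℝ} (hs : x^2 + y^2 + z^2 = 1) (hxy : x*y = 0) (hyz : y*z = 0)
    (hzx : z*x = 0) : ![x, y, z, 0] ∈ CLzeros := by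
  obtain ⟨rfl, rfl⟩ | ⟨rfl, rfl⟩ | ⟨rfl, rfl⟩ :
      (x = 0 ∧ y = 0) ∨ (x = 0 ∧ z = 0) ∨ (y = 0 ∧ z = 0) := by
    rcases mul_eq_zero.1 hxy with h | h <;> rcases mul_eq_zero.1 hyz with h' | h' <;>
      rcases mul_eq_zero.1 hzx with h'' | h'' <;> tauto
  all_goals simp only [zero_pow two_ne_zero, add_zero, zero_add, sq_eq_one_iff] at hs
  all_goals rcases hs with rfl | rfl <;> norm_num [CLzeros]

lemma mem_CLzeros_of_sq_eq_quarter {x y z w : ℝ} (hx : x^2 = 1/4) (hy : y^2 = 1/4)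
    (hz : z^2 = 1/4) (hw : w^2 = 1/4) (hpos : 0 < x*y*z*w) : ![x, y, z, w] ∈ CLzeros := by
  have half {t : ℝ} (ht : t^2 = 1/4) : t = 1/2 ∨ t = -(1/2) :=
    sq_eq_sq_iff_eq_or_eq_neg.1 (by rw [ht]; norm_num)
  rcases half hx with rfl | rfl <;> rcases half hy with rfl | rfl <;>
    rcases half hz with rfl | rfl <;> rcases half hw with rfl | rfl <;>
    norm_num at hpos <;> norm_num [CLzeros]

lemma mem_CLzeros_of_eval_QCL_eq_zero {x y z w : ℝ} (hs : x^2 + y^2 + z^2 + w^2 = 1)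
    (hQ : eval ![x, y, z, w] QCL = 0) : ![x, y, z, w] ∈ CLzeros := by
  rw [eval_QCL] at hQ
  obtain ⟨hxy_yz, hzx_w, hxy_zx⟩ := sq_eq_sq_of_sum_sq_sq_eq_sixteen_mul (p := x*y) (q := y*z)
    (r := z*x) (s := w^2)
    (by linear_combination (x^2*y^2 + y^2*z^2 + z^2*x^2 + w^4 + 4*x*y*z*w) * hQ)
  rcases eq_or_ne w 0 with rfl | hw
  · have hzx : (z*x)^2 = 0 := by rw [hzx_w]; ring
    have hxy : (x*y)^2 = 0 := by rw [hxy_zx, hzx]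
    have hyz : (y*z)^2 = 0 := by rw [← hxy_yz, hxy]
    simp only [sq_eq_zero_iff] at hxy hyz hzx
    exact mem_CLzeros_of_axis (by linarith) hxy hyz hzx
  · have sq_eq {a b c : ℝ} (hab : (a*b)^2 = (w^2)^2) (hbc : (b*c)^2 = (w^2)^2)
        (hca : (c*a)^2 = (w^2)^2) : a^2 = w^2 := by
      have h : (a^2)^2 * (w^2)^2 = (w^2)^2 * (w^2)^2 :=
        calc (a^2)^2 * (w^2)^2 = (a*b)^2 * (c*a)^2 := by rw [← hbc]; ring
          _ = (w^2)^2 * (w^2)^2 := by rw [hab, hca]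
      exact (sq_eq_sq₀ (sq_nonneg a) (sq_nonneg w)).1 (mul_right_cancel₀ (by positivity) h)
    have hxy : (x*y)^2 = (w^2)^2 := hxy_zx.trans hzx_w
    have hyz : (y*z)^2 = (w^2)^2 := hxy_yz.symm.trans hxy
    have hx := sq_eq hxy hyz hzx_w
    have hy := sq_eq hyz hzx_w hxy
    have hz := sq_eq hzx_w hxy hyz
    have hw2 : w^2 = 1/4 := by linarith
    refine mem_CLzeros_of_sq_eq_quarter (by linarith) (by linarith) (by linarith) hw2 ?_
    have hprod : x*y*z*w = w^4 := by
      linear_combination (-hQ + hxy + hyz + hzx_w) / 4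
    rw [hprod]; positivity

lemma eval_QCL_eq_zero_iff_mem_CLzeros {v : Fin 4 → ℝ} (hs : ∑ i, v i ^ 2 = 1) :
    eval v QCL = 0 ↔ v ∈ CLzeros := by
  refine ⟨fun hQ => ?_, fun hv => (eval_QCL_eq_zero_and_sum_sq_eq_one_of_mem_CLzeros hv).1⟩
  obtain ⟨x, y, z, w, rfl⟩ : ∃ x y z w, v = ![x, y, z, w] :=
    ⟨v 0, v 1, v 2, v 3, by ext i; fin_cases i <;> rfl⟩
  exact mem_CLzeros_of_eval_QCL_eq_zero (by simpa [Fin.sum_univ_four] using hs) hQ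

lemma MvPolynomial.IsHomogeneous.exists_eq_of_eval_CLzeros {P : MvPolynomial (Fin 4) ℝ}
    (hP : P.IsHomogeneous 2) (hv : ∀ v ∈ CLzeros, eval v P = 0) :
    ∃ a₁ a₂ a₃ : ℝ,
      P = C a₁ * (X 0 * X 1 - X 2 * X 3) + C a₂ * (X 1 * X 2 - X 0 * X 3)
        + C a₃ * (X 2 * X 0 - X 1 * X 3) := by
  obtain ⟨c, rfl⟩ := hP.exists_eq_sum_C_mul_X_mul_X
  have e (v : Fin 4 → ℝ) (hmem : v ∈ CLzeros) : ∑ i, ∑ j, c i j * (v i * v j) = 0 := by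
    simpa using hv v hmem
  have e₀ := e ![1, 0, 0, 0] (by simp [CLzeros])
  have e₁ := e ![0, 1, 0, 0] (by simp [CLzeros])
  have e₂ := e ![0, 0, 1, 0] (by simp [CLzeros])
  have eA := e ![1/2, -1/2, -1/2, 1/2] (by simp [CLzeros])
  have eB := e ![-1/2, 1/2, -1/2, 1/2] (by simp [CLzeros])
  have eC := e ![-1/2, -1/2, 1/2, 1/2] (by simp [CLzeros])
  have eD := e ![1/2, 1/2, 1/2, 1/2] (by simp [CLzeros])
  simp only [Fin.sum_univ_four, Matrix.cons_val] at e₀ e₁ e₂ eA eB eC eD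
  refine ⟨c 0 1 + c 1 0, c 1 2 + c 2 1, c 2 0 + c 0 2, MvPolynomial.funext fun v => ?_⟩
  simp only [Fin.sum_univ_four, map_add, map_sub, map_mul, eval_C, eval_X]
  linear_combination (v 0^2 - v 3^2) * e₀ + (v 1^2 - v 3^2) * e₁ + (v 2^2 - v 3^2) * e₂
    + v 3^2 * (eA + eB + eC + eD) + v 0 * v 3 * (eD + eA - eB - eC)
    + v 1 * v 3 * (eD - eA + eB - eC) + v 2 * v 3 * (eD - eA - eB + eC)

lemma MvPolynomial.IsHomogeneous.eval_e₄_eq_zero_of_eval_CLzeros {P : MvPolynomial (Fin 4) ℝ}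
    (hP : P.IsHomogeneous 2) (hv : ∀ v ∈ CLzeros, eval v P = 0) : eval ![0, 0, 0, 1] P = 0 := by
  obtain ⟨a₁, a₂, a₃, rfl⟩ := hP.exists_eq_of_eval_CLzeros hv
  simp

/-- The spherical zero set of the Choi–Lam quartic `Q` consists exactly of 14 points;
any quadratic form vanishing at all of them is `a₁(xy−zw) + a₂(yz−xw) + a₃(zx−yw)` and
hence also vanishes at `(0,0,0,1)`, which is not a zero of `Q`. In particular the zero
set of `Q` is not cut out on the sphere by quadratic forms. -/
theorem stmt19 :
    (∀ v : Fin 4 → ℝ, (∑ i, v i ^ 2 = 1) → (eval v QCL = 0 ↔ v ∈ CLzeros))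
    ∧ (∀ P : MvPolynomial (Fin 4) ℝ, P.IsHomogeneous 2 →
        (∀ v ∈ CLzeros, eval v P = 0) →
        (∃ a₁ a₂ a₃ : ℝ,
          P = C a₁ * (X 0 * X 1 - X 2 * X 3) + C a₂ * (X 1 * X 2 - X 0 * X 3)
              + C a₃ * (X 2 * X 0 - X 1 * X 3))
        ∧ eval ![0, 0, 0, 1] P = 0)
    ∧ eval ![0, 0, 0, 1] QCL ≠ 0
    ∧ ¬ ∃ S : Set (MvPolynomial (Fin 4) ℝ), (∀ p ∈ S, p.IsHomogeneous 2) ∧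
        {v : Fin 4 → ℝ | (∑ i, v i ^ 2 = 1) ∧ eval v QCL = 0}
          = {v : Fin 4 → ℝ | (∑ i, v i ^ 2 = 1) ∧ ∀ p ∈ S, eval v p = 0} := by
  have hQe₄ : eval ![0, 0, 0, 1] QCL ≠ 0 := by norm_num [eval_QCL]
  refine ⟨fun v => eval_QCL_eq_zero_iff_mem_CLzeros, fun P hP hv =>
    ⟨hP.exists_eq_of_eval_CLzeros hv, hP.eval_e₄_eq_zero_of_eval_CLzeros hv⟩, hQe₄, ?_⟩
  rintro ⟨S, hS, hSQ⟩
  have hS_CLzeros (p : MvPolynomial (Fin 4) ℝ) (hp : p ∈ S) (u : Fin 4 → ℝ) (hu : u ∈ CLzeros) :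
      eval u p = 0 := by
    obtain ⟨hQu, hsu⟩ := eval_QCL_eq_zero_and_sum_sq_eq_one_of_mem_CLzeros hu
    have hu' : u ∈ {v : Fin 4 → ℝ | (∑ i, v i ^ 2 = 1) ∧ eval v QCL = 0} := ⟨hsu, hQu⟩
    exact (hSQ ▸ hu').2 p hp
  have he₄ : ![0, 0, 0, 1] ∈ {v : Fin 4 → ℝ | (∑ i, v i ^ 2 = 1) ∧ ∀ p ∈ S, eval v p = 0} :=
    ⟨by simp [Fin.sum_univ_four],
      fun p hp => (hS p hp).eval_e₄_eq_zero_of_eval_CLzeros (hS_CLzeros p hp)⟩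
  exact hQe₄ (hSQ ▸ he₄).2
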